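/- arXiv:1210.3962 — 7 statements merged into one kernel-verified Lean document; each statement's English description precedes it below -/
import Mathlib

section
/- Let σ̄ ∈ S⁺_α and set x̄ = G_α(σ̄)⁻¹ c. If every component of x̄ equals 1 or −1 (i.e., x̄ ∈ {−1,1}ⁿ), then x̄ is a global minimizer of the primal problem: for every x ∈ {−1,1}ⁿ, P(x̄) ≤ P(x). -/
open Matrix

/-!
On the hypercube the diagonal term `⟨x, Diag(α + σ̄) x⟩` equals the constant `∑ (α + σ̄)ᵢ`, so
there `P` differs by a constant from `½⟨x, G x⟩ - ⟨x, c⟩` with `G = G_α(σ̄)`. This convex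
quadratic has stationary point `x̄ = G⁻¹ c`, and completing the square gives
`⟨x, G x⟩ - 2⟨x, c⟩ = ⟨x̄, G x̄⟩ - 2⟨x̄, c⟩ + ⟨x - x̄, G (x - x̄)⟩ ≥ ⟨x̄, G x̄⟩ - 2⟨x̄, c⟩`.
-/

variable {ι R : Type*} [Fintype ι]

theorem dotProduct_diagonal_mulVec_of_eq_one_or_eq_neg_one [DecidableEq ι] [CommRing R] (d : ι → R) {y : ι → R}
    (hy : ∀ i, y i = 1 ∨ y i = -1) :
    y ⬝ᵥ diagonal d *ᵥ y = ∑ i, d i := by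
  simp only [dotProduct, mulVec_diagonal]
  refine Finset.sum_congr rfl fun i _ => ?_
  rcases hy i with h | h <;> rw [h] <;> ring

theorem Matrix.IsSymm.dotProduct_mulVec_sub_sub_of_mulVec_eq [CommRing R] {G : Matrix ι ι R}
    (hG : G.IsSymm) {xbar c : ι → R} (hc : G *ᵥ xbar = c) (x : ι → R) :
    (x - xbar) ⬝ᵥ G *ᵥ (x - xbar) =
      (x ⬝ᵥ G *ᵥ x - 2 * (x ⬝ᵥ c)) - (xbar ⬝ᵥ G *ᵥ xbar - 2 * (xbar ⬝ᵥ c)) := by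
  have hcross : xbar ⬝ᵥ G *ᵥ x = x ⬝ᵥ c := by
    rw [dotProduct_mulVec, ← mulVec_transpose, hG.eq, dotProduct_comm, hc]
  rw [mulVec_sub, dotProduct_sub, sub_dotProduct, sub_dotProduct, hcross, hc]
  ring

theorem Matrix.PosSemidef.half_dotProduct_mulVec_sub_le_of_mulVec_eq [Field R] [LinearOrder R]
    [IsStrictOrderedRing R] [StarRing R] [TrivialStar R] {G : Matrix ι ι R} (hG : G.PosSemidef)
    {xbar c : ι → R} (hc : G *ᵥ xbar = c) (x : ι → R) :
    (1 / 2) * (xbar ⬝ᵥ G *ᵥ xbar) - xbar ⬝ᵥ c ≤ (1 / 2) * (x ⬝ᵥ G *ᵥ x) - x ⬝ᵥ c := by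
  have hsq := (isHermitian_iff_isSymm.mp hG.isHermitian).dotProduct_mulVec_sub_sub_of_mulVec_eq hc x
  have hnonneg : 0 ≤ (x - xbar) ⬝ᵥ G *ᵥ (x - xbar) := by
    simpa using hG.dotProduct_mulVec_nonneg (x - xbar)
  linarith

theorem stmt_0_general (n : ℕ)
    (Q : Matrix (Fin n) (Fin n) ℝ)
    (c α σbar : Fin n → ℝ)
    (hσ : (Q + Matrix.diagonal (α + σbar)).PosDef)
    (xbar : Fin n → ℝ)
    (hxbar : xbar = (Q + Matrix.diagonal (α + σbar))⁻¹ *ᵥ c)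
    (hfeas : ∀ i, xbar i = 1 ∨ xbar i = -1) :
    ∀ x : Fin n → ℝ, (∀ i, x i = 1 ∨ x i = -1) →
      (1/2) * (xbar ⬝ᵥ Q *ᵥ xbar) - xbar ⬝ᵥ c ≤ (1/2) * (x ⬝ᵥ Q *ᵥ x) - x ⬝ᵥ c := by
  intro x hx
  set G := Q + diagonal (α + σbar)
  have hsolve : G *ᵥ xbar = c := by
    rw [hxbar, mulVec_mulVec, mul_nonsing_inv _ ((isUnit_iff_isUnit_det G).mp hσ.isUnit),
      one_mulVec]
  have hG_on_cube : ∀ y : Fin n → ℝ, (∀ i, y i = 1 ∨ y i = -1) →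
      y ⬝ᵥ G *ᵥ y = y ⬝ᵥ Q *ᵥ y + ∑ i, (α + σbar) i := fun y hy => by
    rw [add_mulVec, dotProduct_add, dotProduct_diagonal_mulVec_of_eq_one_or_eq_neg_one _ hy]
  have hmin := hσ.posSemidef.half_dotProduct_mulVec_sub_le_of_mulVec_eq hsolve x
  rw [hG_on_cube x hx, hG_on_cube xbar hfeas] at hmin
  linarith

/-- If `σ̄ ∈ S⁺_α` and `x̄ = G_α(σ̄)⁻¹ c` has all components `±1`,
then `x̄` is a global minimizer of `P(x) = (1/2)⟨x, Qx⟩ - ⟨x, c⟩` over `{-1,1}ⁿ`. -/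
theorem stmt_0 (n : ℕ) (hn : 0 < n)
    (Q : Matrix (Fin n) (Fin n) ℝ) (hQ : Q.IsSymm)
    (c α σbar : Fin n → ℝ)
    (hσ : (Q + Matrix.diagonal (α + σbar)).PosDef)
    (xbar : Fin n → ℝ)
    (hxbar : xbar = (Q + Matrix.diagonal (α + σbar))⁻¹ *ᵥ c)
    (hfeas : ∀ i, xbar i = 1 ∨ xbar i = -1) :
    ∀ x : Fin n → ℝ, (∀ i, x i = 1 ∨ x i = -1) →
      (1/2) * (xbar ⬝ᵥ Q *ᵥ xbar) - xbar ⬝ᵥ c ≤ (1/2) * (x ⬝ᵥ Q *ᵥ x) - x ⬝ᵥ c :=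
  stmt_0_general n Q c α σbar hσ xbar hxbar hfeas
end

section
/- Let σ̄ ∈ S⁺_α and set x̄ = G_α(σ̄)⁻¹ c. If x̄ ∈ {−1,1}ⁿ, then there is no duality gap: P(x̄) = P^d_α(σ̄), i.e., (1/2)⟨x̄, Q x̄⟩ − ⟨x̄, c⟩ = −(1/2)⟨G_α(σ̄)⁻¹ c, c⟩ − (1/2)⟨e, σ̄⟩ − (1/2)⟨e, α⟩. -/
/-!
For a sign vector `x` the diagonal part of any quadratic form is invisible:
`⟨x, Diag(d) x⟩ = ∑ dᵢ`. Hence if `G x = c` with `G = Q + Diag(α + σ)`, then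
`⟨x, Q x⟩ = ⟨x, c⟩ - ∑ (αᵢ + σᵢ)`, and since `⟨G⁻¹ c, c⟩ = ⟨x, c⟩` both sides of the
duality identity equal `-(1/2)⟨x, c⟩ - (1/2)∑ (αᵢ + σᵢ)`.
-/

open Matrix

section SignVector

variable {ι R : Type*} [Fintype ι] [DecidableEq ι] [CommRing R]

theorem dotProduct_diagonal_mulVec_of_mul_self_eq_one {x : ι → R} (hx : ∀ i, x i * x i = 1)
    (d : ι → R) : x ⬝ᵥ (diagonal d *ᵥ x) = ∑ i, d i := by
  simp only [dotProduct, mulVec_diagonal]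
  refine Finset.sum_congr rfl fun i _ => ?_
  rw [mul_left_comm, hx i, mul_one]

theorem dotProduct_mulVec_eq_sub_of_add_diagonal_mulVec_eq {Q : Matrix ι ι R} {d x c : ι → R}
    (hx : ∀ i, x i * x i = 1) (hGx : (Q + diagonal d) *ᵥ x = c) :
    x ⬝ᵥ Q *ᵥ x = x ⬝ᵥ c - ∑ i, d i := by
  rw [← hGx, add_mulVec, dotProduct_add, dotProduct_diagonal_mulVec_of_mul_self_eq_one hx]
  ring

end SignVector

theorem stmt_1_general (n : ℕ)
    (Q : Matrix (Fin n) (Fin n) ℝ)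
    (c α σbar : Fin n → ℝ)
    (hσ : (Q + Matrix.diagonal (α + σbar)).PosDef)
    (xbar : Fin n → ℝ)
    (hxbar : xbar = (Q + Matrix.diagonal (α + σbar))⁻¹ *ᵥ c)
    (hfeas : ∀ i, xbar i = 1 ∨ xbar i = -1) :
    (1/2) * (xbar ⬝ᵥ Q *ᵥ xbar) - xbar ⬝ᵥ c =
      -(1/2) * (((Q + Matrix.diagonal (α + σbar))⁻¹ *ᵥ c) ⬝ᵥ c)
        - (1/2) * (∑ i, σbar i) - (1/2) * (∑ i, α i) := by
  have hGx : (Q + diagonal (α + σbar)) *ᵥ xbar = c := by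
    rw [hxbar, mulVec_mulVec, mul_nonsing_inv _ hσ.det_pos.ne'.isUnit, one_mulVec]
  have hsq : ∀ i, xbar i * xbar i = 1 := fun i => by
    rcases hfeas i with h | h <;> simp [h]
  rw [dotProduct_mulVec_eq_sub_of_add_diagonal_mulVec_eq hsq hGx, ← hxbar]
  simp only [Pi.add_apply, Finset.sum_add_distrib]
  ring

/-- If `σ̄ ∈ S⁺_α` and `x̄ = G_α(σ̄)⁻¹ c ∈ {-1,1}ⁿ`, then there is no
duality gap: `P(x̄) = P^d_α(σ̄)`. -/
theorem stmt_1 (n : ℕ) (hn : 0 < n)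
    (Q : Matrix (Fin n) (Fin n) ℝ) (hQ : Q.IsSymm)
    (c α σbar : Fin n → ℝ)
    (hσ : (Q + Matrix.diagonal (α + σbar)).PosDef)
    (xbar : Fin n → ℝ)
    (hxbar : xbar = (Q + Matrix.diagonal (α + σbar))⁻¹ *ᵥ c)
    (hfeas : ∀ i, xbar i = 1 ∨ xbar i = -1) :
    (1/2) * (xbar ⬝ᵥ Q *ᵥ xbar) - xbar ⬝ᵥ c =
      -(1/2) * (((Q + Matrix.diagonal (α + σbar))⁻¹ *ᵥ c) ⬝ᵥ c)
        - (1/2) * (∑ i, σbar i) - (1/2) * (∑ i, α i) :=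
  stmt_1_general n Q c α σbar hσ xbar hxbar hfeas
end

section
/- Weak duality holds between the primal problem and the canonical dual problem: for every σ ∈ S⁺_α and every x ∈ {−1,1}ⁿ, P^d_α(σ) ≤ P(x). -/
open Matrix

/-! With `G = Q + Diag(α + σ)` and `u = G⁻¹ c`, completing the square gives
`⟨x - u, G (x - u)⟩ = ⟨x, G x⟩ - 2 ⟨x, c⟩ + ⟨u, c⟩ ≥ 0`. On the hypercube `x_i² = 1`, so
`⟨x, G x⟩ = ⟨x, Q x⟩ + Σ (α_i + σ_i)`, and the inequality rearranges to `P^d_α(σ) ≤ P(x)`. -/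

namespace Matrix

variable {ι R : Type*} [Fintype ι]

theorem dotProduct_diagonal_mulVec_self_of_sq_eq_one [CommSemiring R] [DecidableEq ι]
    (d : ι → R) {x : ι → R} (hx : ∀ i, x i ^ 2 = 1) :
    x ⬝ᵥ diagonal d *ᵥ x = ∑ i, d i := by
  refine Finset.sum_congr rfl fun i _ => ?_
  rw [mulVec_diagonal, mul_left_comm, ← sq, hx, mul_one]

theorem IsSymm.dotProduct_mulVec_sub_sub [CommRing R] {G : Matrix ι ι R} (hG : G.IsSymm)
    {u c : ι → R} (hu : G *ᵥ u = c) (x : ι → R) :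
    (x - u) ⬝ᵥ G *ᵥ (x - u) = x ⬝ᵥ G *ᵥ x - 2 * (x ⬝ᵥ c) + u ⬝ᵥ c := by
  have hux : u ⬝ᵥ G *ᵥ x = x ⬝ᵥ c := by
    rw [dotProduct_mulVec, ← mulVec_transpose, hG.eq, hu, dotProduct_comm]
  rw [mulVec_sub, sub_dotProduct, dotProduct_sub, dotProduct_sub, hux, hu]
  ring

theorem PosDef.neg_inv_mulVec_dotProduct_le [DecidableEq ι] {G : Matrix ι ι ℝ} (hG : G.PosDef)
    (c x : ι → ℝ) : -((G⁻¹ *ᵥ c) ⬝ᵥ c) ≤ x ⬝ᵥ G *ᵥ x - 2 * (x ⬝ᵥ c) := by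
  have hu : G *ᵥ (G⁻¹ *ᵥ c) = c := by
    rw [mulVec_mulVec, mul_nonsing_inv G (isUnit_iff_isUnit_det G |>.mp hG.isUnit), one_mulVec]
  have hsq := (isHermitian_iff_isSymm.mp hG.isHermitian).dotProduct_mulVec_sub_sub hu x
  have hnonneg := hG.posSemidef.dotProduct_mulVec_nonneg (x - G⁻¹ *ᵥ c)
  simp only [star_trivial] at hnonneg
  linarith

end Matrix

theorem stmt_2_general (n : ℕ)
    (Q : Matrix (Fin n) (Fin n) ℝ)
    (c α : Fin n → ℝ) :
    ∀ σ : Fin n → ℝ, (Q + Matrix.diagonal (α + σ)).PosDef →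
    ∀ x : Fin n → ℝ, (∀ i, x i = 1 ∨ x i = -1) →
      -(1/2) * (((Q + Matrix.diagonal (α + σ))⁻¹ *ᵥ c) ⬝ᵥ c)
        - (1/2) * (∑ i, σ i) - (1/2) * (∑ i, α i)
      ≤ (1/2) * (x ⬝ᵥ Q *ᵥ x) - x ⬝ᵥ c := by
  intro σ hG x hx
  have hsq : ∀ i, x i ^ 2 = 1 := fun i => by rcases hx i with h | h <;> simp [h]
  have hquad : x ⬝ᵥ (Q + diagonal (α + σ)) *ᵥ x = x ⬝ᵥ Q *ᵥ x + (∑ i, α i + ∑ i, σ i) := by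
    rw [add_mulVec, dotProduct_add, dotProduct_diagonal_mulVec_self_of_sq_eq_one _ hsq,
      ← Finset.sum_add_distrib]
    rfl
  linarith [hG.neg_inv_mulVec_dotProduct_le c x]

/-- Weak duality: for every `σ ∈ S⁺_α` and every `x ∈ {-1,1}ⁿ`,
`P^d_α(σ) ≤ P(x)`. -/
theorem stmt_2 (n : ℕ) (hn : 0 < n)
    (Q : Matrix (Fin n) (Fin n) ℝ) (hQ : Q.IsSymm)
    (c α : Fin n → ℝ) :
    ∀ σ : Fin n → ℝ, (Q + Matrix.diagonal (α + σ)).PosDef →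
    ∀ x : Fin n → ℝ, (∀ i, x i = 1 ∨ x i = -1) →
      -(1/2) * (((Q + Matrix.diagonal (α + σ))⁻¹ *ᵥ c) ⬝ᵥ c)
        - (1/2) * (∑ i, σ i) - (1/2) * (∑ i, α i)
      ≤ (1/2) * (x ⬝ᵥ Q *ᵥ x) - x ⬝ᵥ c :=
  stmt_2_general n Q c α
end

section
/- The β-perturbed canonical dual function P^d_{αβ} is differentiable at every point σ̄ ∈ S⁺_α, and its partial derivative with respect to σᵢ at σ̄ equals (1/2) x̄ᵢ² − σ̄ᵢ/βᵢ − 1/2, where x̄ = G_α(σ̄)⁻¹ c. Equivalently, the gradient of P^d_{αβ} at σ̄ is (1/2)(x̄ ∘ x̄) − σ̄ ⊘ β − (1/2)e, where ∘ denotes the componentwise (Hadamard) product and ⊘ the componentwise quotient. -/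
/-!
With `G(σ) = Q + diag(α + σ)`, the first term of the dual function is `A ↦ (A⁻¹ c) ⬝ c` composed
with the affine map `σ ↦ G(σ)`. Inversion has derivative `H ↦ -A⁻¹ H A⁻¹`, and the `i`-th
coordinate direction is `H = diag(eᵢ)`, giving `-(G⁻¹c)ᵢ (c G⁻¹)ᵢ = -x̄ᵢ²` since `G` is symmetric.
The remaining terms are separable in `σ`, with partial derivatives `2σᵢ/βᵢ + 1`.
-/

open Matrix

-- The ℓ∞ operator norm makes square matrices a complete normed algebra, which is what the
-- derivative of `Ring.inverse` requires.
attribute [local instance] Matrix.linftyOpNormedRing Matrix.linftyOpNormedAlgebra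

namespace Matrix

variable {ι : Type*} [Fintype ι] [DecidableEq ι]

theorem mul_diagonal_mul_mulVec_dotProduct {R : Type*} [CommSemiring R]
    (M N : Matrix ι ι R) (v c : ι → R) :
    ((M * diagonal v * N) *ᵥ c) ⬝ᵥ c = ∑ i, (N *ᵥ c) i * (c ᵥ* M) i * v i := by
  rw [← mulVec_mulVec, ← mulVec_mulVec, dotProduct_comm, dotProduct_mulVec, dotProduct]
  simp only [mulVec_diagonal]
  exact Finset.sum_congr rfl fun i _ => by ring

section Calculus

variable {𝕜 : Type*} [RCLike 𝕜]

theorem hasFDerivAt_nonsing_inv {A : Matrix ι ι 𝕜} (hA : IsUnit A) :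
    HasFDerivAt (fun M : Matrix ι ι 𝕜 => M⁻¹)
      (-ContinuousLinearMap.mulLeftRight 𝕜 _ A⁻¹ A⁻¹) A := by
  have h := hasFDerivAt_ringInverse (𝕜 := 𝕜) hA.unit
  simp only [← Ring.inverse_unit, IsUnit.unit_spec, ← nonsing_inv_eq_ringInverse] at h
  simpa only [nonsing_inv_eq_ringInverse] using h

noncomputable def mulVecDotProductCLM (c : ι → 𝕜) : Matrix ι ι 𝕜 →L[𝕜] 𝕜 :=
  LinearMap.toContinuousLinearMap ((dotProductBilin 𝕜 𝕜).flip c ∘ₗ (mulVecBilin 𝕜 𝕜).flip c)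

omit [DecidableEq ι] in
@[simp]
theorem mulVecDotProductCLM_apply (c : ι → 𝕜) (M : Matrix ι ι 𝕜) :
    mulVecDotProductCLM c M = (M *ᵥ c) ⬝ᵥ c := rfl

noncomputable def diagonalCLM : (ι → 𝕜) →L[𝕜] Matrix ι ι 𝕜 :=
  LinearMap.toContinuousLinearMap (diagonalLinearMap ι 𝕜 𝕜)

@[simp]
theorem diagonalCLM_apply (v : ι → 𝕜) : diagonalCLM v = diagonal v := rfl

theorem hasFDerivAt_add_diagonal_add (B : Matrix ι ι 𝕜) (a x : ι → 𝕜) :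
    HasFDerivAt (fun v => B + diagonal (a + v)) (diagonalCLM : (ι → 𝕜) →L[𝕜] Matrix ι ι 𝕜) x := by
  have h : (fun v => B + diagonal (a + v)) = fun v => (B + diagonal a) + diagonalCLM v := by
    funext v
    rw [diagonalCLM_apply, add_assoc, diagonal_add]
    rfl
  rw [h]
  exact (diagonalCLM : (ι → 𝕜) →L[𝕜] Matrix ι ι 𝕜).hasFDerivAt.const_add _

theorem hasFDerivAt_inv_add_diagonal_mulVec_dotProduct (B : Matrix ι ι 𝕜) (a c x : ι → 𝕜)
    (hx : IsUnit (B + diagonal (a + x))) :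
    HasFDerivAt (fun v => ((B + diagonal (a + v))⁻¹ *ᵥ c) ⬝ᵥ c)
      (∑ i, -(((B + diagonal (a + x))⁻¹ *ᵥ c) i * (c ᵥ* (B + diagonal (a + x))⁻¹) i) •
        ContinuousLinearMap.proj (R := 𝕜) (φ := fun _ : ι => 𝕜) i) x := by
  have h := (mulVecDotProductCLM c).hasFDerivAt.comp x
    ((hasFDerivAt_nonsing_inv hx).comp x (hasFDerivAt_add_diagonal_add B a x))
  refine h.congr_fderiv (ContinuousLinearMap.ext fun v => ?_)
  change mulVecDotProductCLM c
    (-((B + diagonal (a + x))⁻¹ * diagonal v * (B + diagonal (a + x))⁻¹)) = _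
  rw [map_neg, mulVecDotProductCLM_apply, mul_diagonal_mul_mulVec_dotProduct]
  simp

end Calculus

end Matrix

theorem hasFDerivAt_sum_comp_apply {ι 𝕜 : Type*} [Fintype ι] [NontriviallyNormedField 𝕜]
    {h : ι → 𝕜 → 𝕜} {d x : ι → 𝕜} (hh : ∀ i, HasDerivAt (h i) (d i) (x i)) :
    HasFDerivAt (fun y : ι → 𝕜 => ∑ i, h i (y i))
      (∑ i, d i • ContinuousLinearMap.proj (R := 𝕜) (φ := fun _ : ι => 𝕜) i) x :=
  HasFDerivAt.fun_sum fun i _ => (hh i).comp_hasFDerivAt x (hasFDerivAt_apply i x)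

theorem sum_smul_proj_apply_single {ι 𝕜 : Type*} [Fintype ι] [DecidableEq ι]
    [NontriviallyNormedField 𝕜] (d : ι → 𝕜) (j : ι) :
    (∑ i, d i • ContinuousLinearMap.proj (R := 𝕜) (φ := fun _ : ι => 𝕜) i) (Pi.single j 1) = d j := by
  simp [Pi.single_apply]

theorem stmt_6_general (n : ℕ)
    (Q : Matrix (Fin n) (Fin n) ℝ)
    (c α β : Fin n → ℝ)
    (Pd : (Fin n → ℝ) → ℝ)
    (hPd : Pd = fun σ =>
      -(1/2) * (((Q + Matrix.diagonal (α + σ))⁻¹ *ᵥ c) ⬝ᵥ c)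
        - (1/2) * (∑ i, ((σ i)^2 / β i + σ i)) - (1/2) * (∑ i, α i))
    (σbar : Fin n → ℝ)
    (hσ : (Q + Matrix.diagonal (α + σbar)).PosDef)
    (xbar : Fin n → ℝ)
    (hxbar : xbar = (Q + Matrix.diagonal (α + σbar))⁻¹ *ᵥ c) :
    DifferentiableAt ℝ Pd σbar ∧
    ∀ i, fderiv ℝ Pd σbar (Pi.single i 1) =
      (1/2) * (xbar i)^2 - σbar i / β i - 1/2 := by
  have hquad := hasFDerivAt_inv_add_diagonal_mulVec_dotProduct Q α c σbar hσ.isUnit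
  have hsep := hasFDerivAt_sum_comp_apply fun i =>
    ((hasDerivAt_pow 2 (σbar i)).div_const (β i)).add (hasDerivAt_id (σbar i))
  have hP := ((hquad.const_mul (-(1/2))).sub (hsep.const_mul (1/2))).sub_const ((1/2) * ∑ i, α i)
  subst hPd
  have hxbar' : c ᵥ* (Q + diagonal (α + σbar))⁻¹ = xbar := by
    rw [hxbar, ← mulVec_transpose, (isHermitian_iff_isSymm.mp hσ.isHermitian.inv).eq]
  refine ⟨hP.differentiableAt, fun i => (DFunLike.congr_fun hP.fderiv _).trans ?_⟩
  simp only [_root_.sub_apply, _root_.smul_apply, sum_smul_proj_apply_single, ← hxbar, hxbar',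
    smul_eq_mul]
  ring

/-- The β-perturbed canonical dual function is differentiable at every
`σ̄ ∈ S⁺_α` and its partial derivative in the `i`-th coordinate direction equals
`(1/2) x̄ᵢ² − σ̄ᵢ/βᵢ − 1/2` where `x̄ = G_α(σ̄)⁻¹ c`. -/
theorem stmt_6 (n : ℕ) (hn : 0 < n)
    (Q : Matrix (Fin n) (Fin n) ℝ) (hQ : Q.IsSymm)
    (c α β : Fin n → ℝ) (hβ : ∀ i, 0 < β i)
    (Pd : (Fin n → ℝ) → ℝ)
    (hPd : Pd = fun σ =>
      -(1/2) * (((Q + Matrix.diagonal (α + σ))⁻¹ *ᵥ c) ⬝ᵥ c)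
        - (1/2) * (∑ i, ((σ i)^2 / β i + σ i)) - (1/2) * (∑ i, α i))
    (σbar : Fin n → ℝ)
    (hσ : (Q + Matrix.diagonal (α + σbar)).PosDef)
    (xbar : Fin n → ℝ)
    (hxbar : xbar = (Q + Matrix.diagonal (α + σbar))⁻¹ *ᵥ c) :
    DifferentiableAt ℝ Pd σbar ∧
    ∀ i, fderiv ℝ Pd σbar (Pi.single i 1) =
      (1/2) * (xbar i)^2 - σbar i / β i - 1/2 :=
  stmt_6_general n Q c α β Pd hPd σbar hσ xbar hxbar
end

section
/- If σ̄ ∈ S⁺_α is a critical point of the β-perturbed canonical dual function P^d_{αβ} (i.e., the derivative of P^d_{αβ} at σ̄ vanishes), then the vector x̄ = G_α(σ̄)⁻¹ c satisfies x̄ᵢ² = 1 + 2σ̄ᵢ/βᵢ for every i = 1, …, n. -/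
/-
Differentiating `G⁻¹` gives `-G⁻¹ (dG) G⁻¹`, and for a diagonal perturbation `dG = Diag d` of
the symmetric matrix `G` this turns `⟨G⁻¹ c, c⟩` into `-∑ⱼ dⱼ xⱼ²` with `x = G⁻¹ c`. Hence the
gradient of `P^d_{αβ}` at `σ` has coordinates `(xᵢ² - 2σᵢ/βᵢ - 1)/2`, and it vanishes exactly
when `xᵢ² = 1 + 2σᵢ/βᵢ`.
-/

open Matrix

attribute [local instance] Matrix.linftyOpNormedRing Matrix.linftyOpNormedAlgebra

variable {ι : Type*} [Fintype ι]

theorem hasFDerivAt_sum_sq_div_add (β σ : ι → ℝ) :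
    HasFDerivAt (fun τ : ι → ℝ => ∑ j, (τ j ^ 2 / β j + τ j))
      (∑ j, (2 * σ j / β j + 1) • (ContinuousLinearMap.proj j : (ι → ℝ) →L[ℝ] ℝ)) σ := by
  refine HasFDerivAt.fun_sum fun j _ => ?_
  have hd : HasDerivAt (fun t : ℝ => t ^ 2 / β j + t) (2 * σ j / β j + 1) (σ j) := by
    simpa using ((hasDerivAt_pow 2 (σ j)).div_const (β j)).fun_add (hasDerivAt_id' (σ j))
  refine (hd.hasFDerivAt.comp σ
    (ContinuousLinearMap.proj (R := ℝ) (φ := fun _ : ι => ℝ) j).hasFDerivAt).congr_fderiv ?_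
  ext d
  simp [mul_comm]

variable [DecidableEq ι]

theorem Matrix.hasFDerivAt_nonsing_inv_s7 {A : Matrix ι ι ℝ} (hA : IsUnit A) :
    HasFDerivAt (fun B : Matrix ι ι ℝ => B⁻¹)
      (-ContinuousLinearMap.mulLeftRight ℝ _ A⁻¹ A⁻¹) A := by
  have h := hasFDerivAt_ringInverse (𝕜 := ℝ) hA.unit
  rw [Matrix.coe_units_inv, hA.unit_spec] at h
  rwa [show (fun B : Matrix ι ι ℝ => B⁻¹) = Ring.inverse from funext nonsing_inv_eq_ringInverse]

theorem Matrix.dotProduct_mul_diagonal_mul_mulVec {A : Matrix ι ι ℝ} (hA : A.IsSymm)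
    (d c : ι → ℝ) :
    ((A * diagonal d * A) *ᵥ c) ⬝ᵥ c = ∑ j, d j * (A *ᵥ c) j ^ 2 := by
  rw [← mulVec_mulVec, ← mulVec_mulVec, dotProduct_comm, dotProduct_mulVec,
    ← mulVec_transpose, hA.eq]
  simp only [dotProduct, mulVec_diagonal]
  exact Finset.sum_congr rfl fun j _ => by ring

theorem hasFDerivAt_inv_add_diagonal_mulVec_dotProduct {Q : Matrix ι ι ℝ} (hQ : Q.IsSymm)
    (c : ι → ℝ) {σ : ι → ℝ} (hσ : IsUnit (Q + diagonal σ)) :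
    HasFDerivAt (fun τ => ((Q + diagonal τ)⁻¹ *ᵥ c) ⬝ᵥ c)
      (-∑ j, ((Q + diagonal σ)⁻¹ *ᵥ c) j ^ 2 •
        (ContinuousLinearMap.proj j : (ι → ℝ) →L[ℝ] ℝ)) σ := by
  set A := Q + diagonal σ
  let quad : Matrix ι ι ℝ →L[ℝ] ℝ := LinearMap.toContinuousLinearMap
    { toFun := fun B => (B *ᵥ c) ⬝ᵥ c
      map_add' := fun X Y => by simp only [add_mulVec, add_dotProduct]
      map_smul' := fun r X => by simp only [smul_mulVec, smul_dotProduct, RingHom.id_apply] }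
  have hG : HasFDerivAt (fun τ => Q + diagonal τ)
      (diagonalLinearMap ι ℝ ℝ).toContinuousLinearMap σ :=
    (diagonalLinearMap ι ℝ ℝ).toContinuousLinearMap.hasFDerivAt.const_add Q
  have hA : A⁻¹.IsSymm := by
    rw [IsSymm, transpose_nonsing_inv, show Aᵀ = A from (hQ.add (isSymm_diagonal σ)).eq]
  refine (quad.hasFDerivAt.comp σ ((hasFDerivAt_nonsing_inv_s7 hσ).comp σ hG)).congr_fderiv ?_
  ext d
  change (-(A⁻¹ * diagonal d * A⁻¹) *ᵥ c) ⬝ᵥ c = _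
  simp [neg_mulVec, dotProduct_mul_diagonal_mul_mulVec hA, mul_comm]

/-- The β-perturbed canonical dual function `P^d_{αβ}`. -/
noncomputable def perturbedDual (Q : Matrix ι ι ℝ) (c α β σ : ι → ℝ) : ℝ :=
  -(1/2) * (((Q + diagonal (α + σ))⁻¹ *ᵥ c) ⬝ᵥ c)
    - (1/2) * (∑ i, ((σ i)^2 / β i + σ i)) - (1/2) * (∑ i, α i)

theorem hasFDerivAt_perturbedDual {Q : Matrix ι ι ℝ} (hQ : Q.IsSymm) (c α β : ι → ℝ)
    {σ : ι → ℝ} (hσ : IsUnit (Q + diagonal (α + σ))) :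
    HasFDerivAt (perturbedDual Q c α β)
      ((1/2 : ℝ) • ∑ j, (((Q + diagonal (α + σ))⁻¹ *ᵥ c) j ^ 2 - (2 * σ j / β j + 1)) •
        (ContinuousLinearMap.proj j : (ι → ℝ) →L[ℝ] ℝ)) σ := by
  have hshift : ∀ τ, Q + diagonal (α + τ) = (Q + diagonal α) + diagonal τ := fun τ => by
    rw [add_assoc, diagonal_add]; rfl
  rw [hshift] at hσ ⊢
  have hquad :=
    hasFDerivAt_inv_add_diagonal_mulVec_dotProduct (hQ.add (isSymm_diagonal α)) c hσ
  unfold perturbedDual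
  simp only [hshift]
  refine (((hquad.const_mul (-(1/2))).sub
    ((hasFDerivAt_sum_sq_div_add β σ).const_mul (1/2))).sub_const _).congr_fderiv ?_
  ext d
  simp only [one_div, smul_neg, neg_smul, neg_neg, _root_.sub_apply, _root_.smul_apply,
    _root_.sum_apply, ContinuousLinearMap.proj_apply, smul_eq_mul, Finset.mul_sum,
    ← Finset.sum_sub_distrib]
  exact Finset.sum_congr rfl fun _ _ => by ring

theorem stmt_7_general (n : ℕ)
    (Q : Matrix (Fin n) (Fin n) ℝ) (hQ : Q.IsSymm)
    (c α β : Fin n → ℝ)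
    (Pd : (Fin n → ℝ) → ℝ)
    (hPd : Pd = fun σ =>
      -(1/2) * (((Q + Matrix.diagonal (α + σ))⁻¹ *ᵥ c) ⬝ᵥ c)
        - (1/2) * (∑ i, ((σ i)^2 / β i + σ i)) - (1/2) * (∑ i, α i))
    (σbar : Fin n → ℝ)
    (hσ : (Q + Matrix.diagonal (α + σbar)).PosDef)
    (hcrit : fderiv ℝ Pd σbar = 0)
    (xbar : Fin n → ℝ)
    (hxbar : xbar = (Q + Matrix.diagonal (α + σbar))⁻¹ *ᵥ c) :
    ∀ i, (xbar i)^2 = 1 + 2 * σbar i / β i := by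
  intro i
  have hPd' : Pd = perturbedDual Q c α β := hPd
  have hgrad := (hasFDerivAt_perturbedDual hQ c α β hσ.isUnit).fderiv
  rw [← hPd', hcrit] at hgrad
  have hi : (1/2 : ℝ) * (xbar i ^ 2 - (2 * σbar i / β i + 1)) = 0 := by
    simpa [hxbar, Pi.single_apply] using congrArg (· (Pi.single i 1)) hgrad.symm
  linarith

/-- If `σ̄ ∈ S⁺_α` is a critical point of the β-perturbed canonical
dual function (its derivative vanishes at `σ̄`), then `x̄ = G_α(σ̄)⁻¹ c` satisfies
`x̄ᵢ² = 1 + 2σ̄ᵢ/βᵢ` for all `i`. -/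
theorem stmt_7 (n : ℕ) (hn : 0 < n)
    (Q : Matrix (Fin n) (Fin n) ℝ) (hQ : Q.IsSymm)
    (c α β : Fin n → ℝ) (hβ : ∀ i, 0 < β i)
    (Pd : (Fin n → ℝ) → ℝ)
    (hPd : Pd = fun σ =>
      -(1/2) * (((Q + Matrix.diagonal (α + σ))⁻¹ *ᵥ c) ⬝ᵥ c)
        - (1/2) * (∑ i, ((σ i)^2 / β i + σ i)) - (1/2) * (∑ i, α i))
    (σbar : Fin n → ℝ)
    (hσ : (Q + Matrix.diagonal (α + σbar)).PosDef)
    (hcrit : fderiv ℝ Pd σbar = 0)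
    (xbar : Fin n → ℝ)
    (hxbar : xbar = (Q + Matrix.diagonal (α + σbar))⁻¹ *ᵥ c) :
    ∀ i, (xbar i)^2 = 1 + 2 * σbar i / β i :=
  stmt_7_general n Q hQ c α β Pd hPd σbar hσ hcrit xbar hxbar
end

section
/- The function σ ↦ ⟨G_α(σ)⁻¹ c, c⟩ is convex on the dual feasible set S⁺_α; equivalently, the function σ ↦ −(1/2)⟨G_α(σ)⁻¹ c, c⟩ is concave on S⁺_α: for all σ₁, σ₂ ∈ S⁺_α and all t ∈ [0,1], ⟨G_α(tσ₁ + (1−t)σ₂)⁻¹ c, c⟩ ≤ t⟨G_α(σ₁)⁻¹ c, c⟩ + (1−t)⟨G_α(σ₂)⁻¹ c, c⟩. -/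
/-!
For positive definite `A`, completing the square gives
`⟪A⁻¹ c, c⟫ = max_x (2 ⟪c, x⟫ - ⟪x, A x⟫)`, the maximum being attained at `x = A⁻¹ c`.
Each function in this maximum is affine in `A`, so `A ↦ ⟪A⁻¹ c, c⟫` is convex on the
(convex) cone of positive definite matrices, and `σ ↦ G_α(σ)` is affine.
-/

open Matrix

namespace Matrix

theorem convex_setOf_posDef {n : Type*} : Convex ℝ {A : Matrix n n ℝ | A.PosDef} := by
  intro A hA B hB a b ha hb hab
  rcases ha.eq_or_lt with rfl | ha
  · obtain rfl : b = 1 := by linarith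
    simpa using hB
  · exact (hA.smul ha).add_posSemidef (hB.posSemidef.smul hb)

variable {n : Type*} [Fintype n] [DecidableEq n]

theorem mulVec_inv_mulVec {A : Matrix n n ℝ} (hA : IsUnit A) (c : n → ℝ) :
    A *ᵥ (A⁻¹ *ᵥ c) = c := by
  rw [mulVec_mulVec, mul_nonsing_inv _ ((isUnit_iff_isUnit_det A).1 hA), one_mulVec]

theorem PosDef.two_mul_dotProduct_sub_le_inv_mulVec_dotProduct {A : Matrix n n ℝ}
    (hA : A.PosDef) (c x : n → ℝ) :
    2 * (c ⬝ᵥ x) - x ⬝ᵥ (A *ᵥ x) ≤ (A⁻¹ *ᵥ c) ⬝ᵥ c := by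
  set b := A⁻¹ *ᵥ c
  have hAb : A *ᵥ b = c := mulVec_inv_mulVec hA.isUnit c
  have hbA : b ᵥ* A = c := by
    rw [← mulVec_transpose, ← conjTranspose_eq_transpose_of_trivial, hA.isHermitian.eq, hAb]
  have hsq := hA.posSemidef.dotProduct_mulVec_nonneg (x - b)
  simp only [star_trivial, mulVec_sub, dotProduct_sub, sub_dotProduct, hAb,
    dotProduct_mulVec b A x, hbA, dotProduct_comm x c] at hsq
  linarith

theorem inv_mulVec_dotProduct_eq_of_isUnit {A : Matrix n n ℝ} (hA : IsUnit A) (c : n → ℝ) :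
    (A⁻¹ *ᵥ c) ⬝ᵥ c = 2 * (c ⬝ᵥ (A⁻¹ *ᵥ c)) - (A⁻¹ *ᵥ c) ⬝ᵥ (A *ᵥ (A⁻¹ *ᵥ c)) := by
  rw [mulVec_inv_mulVec hA, dotProduct_comm c]
  ring

theorem convexOn_inv_mulVec_dotProduct (c : n → ℝ) :
    ConvexOn ℝ {A : Matrix n n ℝ | A.PosDef} (fun A ↦ (A⁻¹ *ᵥ c) ⬝ᵥ c) := by
  refine ⟨convex_setOf_posDef, fun A hA B hB a b ha hb hab ↦ ?_⟩
  set M := a • A + b • B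
  set x := M⁻¹ *ᵥ c
  have hM : M.PosDef := convex_setOf_posDef hA hB ha hb hab
  calc (M⁻¹ *ᵥ c) ⬝ᵥ c = 2 * (c ⬝ᵥ x) - x ⬝ᵥ (M *ᵥ x) :=
        inv_mulVec_dotProduct_eq_of_isUnit hM.isUnit c
    _ = a * (2 * (c ⬝ᵥ x) - x ⬝ᵥ (A *ᵥ x)) + b * (2 * (c ⬝ᵥ x) - x ⬝ᵥ (B *ᵥ x)) := by
      simp only [M, add_mulVec, smul_mulVec, dotProduct_add, dotProduct_smul, smul_eq_mul]
      linear_combination (2 * (c ⬝ᵥ x)) * hab.symm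
    _ ≤ a * ((A⁻¹ *ᵥ c) ⬝ᵥ c) + b * ((B⁻¹ *ᵥ c) ⬝ᵥ c) := by
      gcongr
      · exact hA.two_mul_dotProduct_sub_le_inv_mulVec_dotProduct c x
      · exact hB.two_mul_dotProduct_sub_le_inv_mulVec_dotProduct c x

end Matrix

theorem stmt_11_general (n : ℕ)
    (Q : Matrix (Fin n) (Fin n) ℝ)
    (c α : Fin n → ℝ) :
    ∀ σ₁ σ₂ : Fin n → ℝ,
      (Q + Matrix.diagonal (α + σ₁)).PosDef →
      (Q + Matrix.diagonal (α + σ₂)).PosDef →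
      ∀ t : ℝ, t ∈ Set.Icc (0:ℝ) 1 →
        ((Q + Matrix.diagonal (α + (t • σ₁ + (1 - t) • σ₂)))⁻¹ *ᵥ c) ⬝ᵥ c
          ≤ t * (((Q + Matrix.diagonal (α + σ₁))⁻¹ *ᵥ c) ⬝ᵥ c)
            + (1 - t) * (((Q + Matrix.diagonal (α + σ₂))⁻¹ *ᵥ c) ⬝ᵥ c) := by
  intro σ₁ σ₂ h₁ h₂ t ⟨ht₀, ht₁⟩
  let G : (Fin n → ℝ) →ᵃ[ℝ] Matrix (Fin n) (Fin n) ℝ :=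
    AffineMap.const ℝ _ (Q + diagonal α) + (diagonalLinearMap (Fin n) ℝ ℝ).toAffineMap
  have hG (σ : Fin n → ℝ) : G σ = Q + diagonal (α + σ) := by
    simp [G, add_assoc]
  have hconv := ((convexOn_inv_mulVec_dotProduct c).comp_affineMap G).2
    (x := σ₁) (y := σ₂) (by rwa [Set.mem_preimage, hG]) (by rwa [Set.mem_preimage, hG])
    ht₀ (sub_nonneg.2 ht₁) (add_sub_cancel t 1)
  simpa only [Function.comp_apply, hG, smul_eq_mul] using hconv

/-- The function `σ ↦ ⟨G_α(σ)⁻¹ c, c⟩` is convex on the dual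
feasible set `S⁺_α`. -/
theorem stmt_11 (n : ℕ) (hn : 0 < n)
    (Q : Matrix (Fin n) (Fin n) ℝ) (hQ : Q.IsSymm)
    (c α : Fin n → ℝ) :
    ∀ σ₁ σ₂ : Fin n → ℝ,
      (Q + Matrix.diagonal (α + σ₁)).PosDef →
      (Q + Matrix.diagonal (α + σ₂)).PosDef →
      ∀ t : ℝ, t ∈ Set.Icc (0:ℝ) 1 →
        ((Q + Matrix.diagonal (α + (t • σ₁ + (1 - t) • σ₂)))⁻¹ *ᵥ c) ⬝ᵥ c
          ≤ t * (((Q + Matrix.diagonal (α + σ₁))⁻¹ *ᵥ c) ⬝ᵥ c)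
            + (1 - t) * (((Q + Matrix.diagonal (α + σ₂))⁻¹ *ᵥ c) ⬝ᵥ c) :=
  stmt_11_general n Q c α
end

section
/- If βᵢ > 0 for all i, then the β-perturbed canonical dual function P^d_{αβ} is strictly concave on the dual feasible set S⁺_α: for all σ₁, σ₂ ∈ S⁺_α with σ₁ ≠ σ₂ and all t ∈ (0,1), P^d_{αβ}(tσ₁ + (1−t)σ₂) > t·P^d_{αβ}(σ₁) + (1−t)·P^d_{αβ}(σ₂). -/
/-! The dual function is `-1/2` times the sum of two functions of `σ`, up to a constant.
The first, `M ↦ ⟪M⁻¹ c, c⟫`, is convex on positive definite matrices: completing the square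
exhibits it as the supremum over `x` of the affine functions `M ↦ 2⟪c, x⟫ - ⟪x, M x⟫`, attained
at `x = M⁻¹ c`; precomposing with the affine map `σ ↦ Q + Diag(α + σ)` keeps it convex. The second,
`∑ (σᵢ² / βᵢ + σᵢ)`, is strictly convex because every `βᵢ > 0`. -/

open Matrix Set

namespace Matrix

variable {ι : Type*} [Fintype ι]

omit [Fintype ι] in
theorem convex_posDef : Convex ℝ {M : Matrix ι ι ℝ | M.PosDef} := by
  intro A hA B hB a b ha hb hab
  rcases ha.lt_or_eq with ha | rfl
  · exact (hA.smul ha).add_posSemidef (hB.posSemidef.smul hb)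
  · rw [zero_add] at hab
    subst hab
    simpa using hB

variable [DecidableEq ι]

theorem inv_mulVec_dotProduct_eq {R : Type*} [CommRing R] {M : Matrix ι ι R} (hM : M.IsSymm)
    (hdet : IsUnit M.det) (c x : ι → R) :
    (M⁻¹ *ᵥ c) ⬝ᵥ c
      = 2 * (c ⬝ᵥ x) - x ⬝ᵥ (M *ᵥ x) + (x - M⁻¹ *ᵥ c) ⬝ᵥ (M *ᵥ (x - M⁻¹ *ᵥ c)) := by
  set u := M⁻¹ *ᵥ c
  have hMu : M *ᵥ u = c := by rw [mulVec_mulVec, mul_nonsing_inv _ hdet, one_mulVec]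
  have hux : u ⬝ᵥ (M *ᵥ x) = c ⬝ᵥ x := by
    rw [dotProduct_mulVec, ← mulVec_transpose, hM.eq, hMu, dotProduct_comm]
  rw [mulVec_sub, hMu, dotProduct_sub, sub_dotProduct, sub_dotProduct, hux,
    dotProduct_comm x c]
  ring

theorem convexOn_inv_mulVec_dotProduct_s12 (c : ι → ℝ) :
    ConvexOn ℝ {M : Matrix ι ι ℝ | M.PosDef} (fun M => (M⁻¹ *ᵥ c) ⬝ᵥ c) := by
  refine ⟨convex_posDef, fun A hA B hB a b ha hb hab => ?_⟩
  set M := a • A + b • B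
  set u := M⁻¹ *ᵥ c
  have hM : M.PosDef := convex_posDef hA hB ha hb hab
  have square {N : Matrix ι ι ℝ} (hN : N.PosDef) := inv_mulVec_dotProduct_eq
    (isHermitian_iff_isSymm.mp hN.isHermitian) ((isUnit_iff_isUnit_det _).mp hN.isUnit) c u
  have lower_bound {N : Matrix ι ι ℝ} (hN : N.PosDef) :
      2 * (c ⬝ᵥ u) - u ⬝ᵥ (N *ᵥ u) ≤ (N⁻¹ *ᵥ c) ⬝ᵥ c := by
    rw [square hN]
    exact le_add_of_nonneg_right (hN.posSemidef.dotProduct_mulVec_nonneg _)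
  have attained : (M⁻¹ *ᵥ c) ⬝ᵥ c = 2 * (c ⬝ᵥ u) - u ⬝ᵥ (M *ᵥ u) := by
    rw [square hM, sub_self, zero_dotProduct, add_zero]
  have split : u ⬝ᵥ (M *ᵥ u) = a * (u ⬝ᵥ (A *ᵥ u)) + b * (u ⬝ᵥ (B *ᵥ u)) := by
    simp only [M, add_mulVec, smul_mulVec, dotProduct_add, dotProduct_smul, smul_eq_mul]
  simp only [smul_eq_mul, attained, split]
  linear_combination mul_le_mul_of_nonneg_left (lower_bound hA) ha +
    mul_le_mul_of_nonneg_left (lower_bound hB) hb - 2 * (c ⬝ᵥ u) * hab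

end Matrix

theorem strictConvexOn_univ_sum_apply {ι : Type*} [Fintype ι] {f : ι → ℝ → ℝ}
    (hf : ∀ i, StrictConvexOn ℝ univ (f i)) :
    StrictConvexOn ℝ univ (fun x : ι → ℝ => ∑ i, f i (x i)) := by
  refine ⟨convex_univ, fun x _ y _ hxy a b ha hb hab => ?_⟩
  obtain ⟨j, hj⟩ := Function.ne_iff.mp hxy
  simp only [Pi.add_apply, Pi.smul_apply, smul_eq_mul, Finset.mul_sum, ← Finset.sum_add_distrib]
  refine Finset.sum_lt_sum (fun i _ => ?_) ⟨j, Finset.mem_univ j, ?_⟩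
  · exact (hf i).convexOn.2 (mem_univ _) (mem_univ _) ha.le hb.le hab
  · exact (hf j).2 (mem_univ _) (mem_univ _) hj ha hb hab

theorem strictConvexOn_sq_div_add {β : ℝ} (hβ : 0 < β) :
    StrictConvexOn ℝ univ (fun x : ℝ => x ^ 2 / β + x) := by
  refine ⟨convex_univ, fun x _ y _ hxy a b ha hb hab => ?_⟩
  obtain rfl : b = 1 - a := by linarith
  have hgap : a * (x ^ 2 / β + x) + (1 - a) * (y ^ 2 / β + y)
      - ((a * x + (1 - a) * y) ^ 2 / β + (a * x + (1 - a) * y))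
      = a * (1 - a) * (x - y) ^ 2 / β := by
    field_simp
    ring
  have : 0 < a * (1 - a) * (x - y) ^ 2 / β := by
    have := sub_ne_zero.2 hxy
    positivity
  simp only [smul_eq_mul]
  linarith

theorem stmt_12_general (n : ℕ)
    (Q : Matrix (Fin n) (Fin n) ℝ)
    (c α β : Fin n → ℝ) (hβ : ∀ i, 0 < β i)
    (Pd : (Fin n → ℝ) → ℝ)
    (hPd : Pd = fun σ =>
      -(1/2) * (((Q + Matrix.diagonal (α + σ))⁻¹ *ᵥ c) ⬝ᵥ c)
        - (1/2) * (∑ i, ((σ i)^2 / β i + σ i)) - (1/2) * (∑ i, α i)) :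
    ∀ σ₁ σ₂ : Fin n → ℝ,
      (Q + Matrix.diagonal (α + σ₁)).PosDef →
      (Q + Matrix.diagonal (α + σ₂)).PosDef →
      σ₁ ≠ σ₂ →
      ∀ t : ℝ, t ∈ Set.Ioo (0:ℝ) 1 →
        t * Pd σ₁ + (1 - t) * Pd σ₂ < Pd (t • σ₁ + (1 - t) • σ₂) := by
  intro σ₁ σ₂ h₁ h₂ hne t ⟨ht0, ht1⟩
  let G : (Fin n → ℝ) →ᵃ[ℝ] Matrix (Fin n) (Fin n) ℝ :=
    (diagonalLinearMap (Fin n) ℝ ℝ).toAffineMap + AffineMap.const ℝ _ (Q + diagonal α)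
  have hG (σ : Fin n → ℝ) : G σ = Q + diagonal (α + σ) := by
    change diagonal σ + (Q + diagonal α) = _
    rw [show diagonal (α + σ) = diagonal α + diagonal σ from (diagonal_add α σ).symm]
    abel
  have hstrict : StrictConvexOn ℝ (G ⁻¹' {M | M.PosDef})
      (fun σ => ((G σ)⁻¹ *ᵥ c) ⬝ᵥ c + ∑ i, (σ i ^ 2 / β i + σ i)) :=
    ((convexOn_inv_mulVec_dotProduct_s12 c).comp_affineMap G).add_strictConvexOn
      ((strictConvexOn_univ_sum_apply fun i => strictConvexOn_sq_div_add (hβ i)).subset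
        (subset_univ _) (convex_posDef.affine_preimage G))
  have hmid := hstrict.2 (by simpa [hG] using h₁) (by simpa [hG] using h₂) hne ht0
    (sub_pos.2 ht1) (add_sub_cancel _ _)
  simp only [hG, smul_eq_mul] at hmid
  subst hPd
  linarith

/-- If `βᵢ > 0` for all `i`, then the β-perturbed canonical dual
function `P^d_{αβ}` is strictly concave on the dual feasible set `S⁺_α`. -/
theorem stmt_12 (n : ℕ) (hn : 0 < n)
    (Q : Matrix (Fin n) (Fin n) ℝ) (hQ : Q.IsSymm)
    (c α β : Fin n → ℝ) (hβ : ∀ i, 0 < β i)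
    (Pd : (Fin n → ℝ) → ℝ)
    (hPd : Pd = fun σ =>
      -(1/2) * (((Q + Matrix.diagonal (α + σ))⁻¹ *ᵥ c) ⬝ᵥ c)
        - (1/2) * (∑ i, ((σ i)^2 / β i + σ i)) - (1/2) * (∑ i, α i)) :
    ∀ σ₁ σ₂ : Fin n → ℝ,
      (Q + Matrix.diagonal (α + σ₁)).PosDef →
      (Q + Matrix.diagonal (α + σ₂)).PosDef →
      σ₁ ≠ σ₂ →
      ∀ t : ℝ, t ∈ Set.Ioo (0:ℝ) 1 →
        t * Pd σ₁ + (1 - t) * Pd σ₂ < Pd (t • σ₁ + (1 - t) • σ₂) :=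
  stmt_12_general n Q c α β hβ Pd hPd
end
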